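/- arXiv:1101.4401 — 3 statements merged into one kernel-verified Lean document; each statement's English description precedes it below -/
import Mathlib

section
/- There is no utilitarian dumping paradox when non-connected pieces are allowed: if y is an envy-free partial allocation of the cake [0,1] (pieces may be arbitrary measurable sets), then there exists an envy-free complete allocation z of [0,1] whose utilitarian welfare is at least that of y. -/
open MeasureTheory Set
open scoped ENNReal

/-- No dumping paradox with non-connected pieces. -/
theorem no_dumping_paradox_nonconnected (n : ℕ) (v : Fin n → Measure ℝ)
    (hprob : ∀ i, v i (Set.Icc (0:ℝ) 1) = 1)
    (hna : ∀ i, ∀ x : ℝ, v i {x} = 0)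
    -- any measurable subset of the cake admits a complete envy-free division
    (hEFdiv : ∀ S : Set ℝ, MeasurableSet S → S ⊆ Set.Icc (0:ℝ) 1 →
      ∃ B : Fin n → Set ℝ, (∀ i, MeasurableSet (B i)) ∧ (∀ i, B i ⊆ S) ∧
        (Pairwise fun i j => Disjoint (B i) (B j)) ∧
        (∀ i j, v i (B j) ≤ v i (B i)) ∧
        (∀ i, v i (⋃ j, B j) = v i S))
    -- y is an envy-free (possibly partial) allocation
    (y : Fin n → Set ℝ)
    (hym : ∀ i, MeasurableSet (y i)) (hys : ∀ i, y i ⊆ Set.Icc (0:ℝ) 1)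
    (hyd : Pairwise fun i j => Disjoint (y i) (y j))
    (hyEF : ∀ i j, v i (y j) ≤ v i (y i)) :
    -- there is an envy-free complete allocation z at least as good
    ∃ z : Fin n → Set ℝ, (∀ i, MeasurableSet (z i)) ∧ (∀ i, z i ⊆ Set.Icc (0:ℝ) 1) ∧
      (Pairwise fun i j => Disjoint (z i) (z j)) ∧
      (∀ i j, v i (z j) ≤ v i (z i)) ∧
      (∀ i, v i (⋃ j, z j) = v i (Set.Icc (0:ℝ) 1)) ∧
      (∑ i, v i (y i) ≤ ∑ i, v i (z i)) := by

  set S : Set ℝ := Set.Icc (0:ℝ) 1 \ ⋃ j, y j with hS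
  have hSm : MeasurableSet S := (measurableSet_Icc).diff (MeasurableSet.iUnion hym)
  obtain ⟨B, hBm, hBs, hBd, hBEF, hBcomp⟩ := hEFdiv S hSm diff_subset
  have hBS : ∀ i, B i ⊆ S := hBs
  have hByDisj : ∀ i j, Disjoint (B i) (y j) := by
    intro i j
    exact (disjoint_sdiff_left.mono_left (hBS i)).mono_right (Set.subset_iUnion y j)
  refine ⟨fun i => y i ∪ B i, fun i => (hym i).union (hBm i), ?_, ?_, ?_, ?_, ?_⟩
  · intro i
    exact Set.union_subset (hys i) ((hBS i).trans diff_subset)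
  · intro i j hij
    exact Set.disjoint_union_left.mpr
      ⟨Set.disjoint_union_right.mpr ⟨hyd hij, (hByDisj j i).symm⟩,
       Set.disjoint_union_right.mpr ⟨hByDisj i j, hBd hij⟩⟩
  · intro i j
    have h1 : v i (y j ∪ B j) = v i (y j) + v i (B j) := by
      rw [measure_union (hByDisj j j).symm (hBm j)]
    have h2 : v i (y i ∪ B i) = v i (y i) + v i (B i) := by
      rw [measure_union (hByDisj i i).symm (hBm i)]
    rw [h1, h2]
    exact add_le_add (hyEF i j) (hBEF i j)
  · intro i
    have hU : (⋃ j, y j ∪ B j) = (⋃ j, y j) ∪ (⋃ j, B j) := Set.iUnion_union_distrib _ _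
    have hdisj : Disjoint (⋃ j, y j) (⋃ j, B j) := by
      rw [Set.disjoint_iUnion_left, ]
      intro a
      rw [Set.disjoint_iUnion_right]
      intro b
      exact (hByDisj b a).symm
    rw [hU, measure_union hdisj (MeasurableSet.iUnion hBm), hBcomp i,
      ← measure_union (disjoint_sdiff_right : Disjoint (⋃ j, y j) S) hSm]
    congr 1
    rw [Set.union_diff_cancel (Set.iUnion_subset hys)]
  · apply Finset.sum_le_sum
    intro i _
    exact measure_mono Set.subset_union_left
end

section
/- For two players Alice and Bob on the cake [0,1], where Alice's measure is uniform on [0,1] and Bob's measure is uniform on the interval [1/2 - δ, 1/2 + δ] (for small δ > 0), every envy-free complete connected division has utilitarian welfare at most 1 + 2δ·c for an appropriate constant, while there is an envy-free partial connected division with utilitarian welfare at least 3/2 - ε: give Bob the interval (1/2 - δ, 1 - ε') and Alice the interval (0, 1/2 - δ), discarding (1 - ε', 1) for suitable ε'. In particular, for any ε > 0 there is a two-player instance exhibiting a utilitarian dumping paradox of at least 3/2 - ε. -/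
open MeasureTheory Set
open scoped ENNReal

/-- A connected division of the cake `[0,1]` among `n` players: each player gets an
open interval, the intervals are pairwise disjoint and contained in `[0,1]`. -/
structure ConnDiv (n : ℕ) where
  pieces : Fin n → Set ℝ
  isInterval : ∀ i, ∃ a b : ℝ, pieces i = Set.Ioo a b
  subset : ∀ i, pieces i ⊆ Set.Icc (0:ℝ) 1
  disj : Pairwise fun i j => Disjoint (pieces i) (pieces j)

/-- A connected division is complete if the closures of the pieces cover `[0,1]`. -/
def ConnDiv.Complete {n : ℕ} (d : ConnDiv n) : Prop :=
  Set.Icc (0:ℝ) 1 ⊆ ⋃ i, closure (d.pieces i)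

/-- Envy-freeness: every player weakly prefers her own piece. -/
def EnvyFree {n : ℕ} (v : Fin n → Measure ℝ) (d : ConnDiv n) : Prop :=
  ∀ i j, v i (d.pieces j) ≤ v i (d.pieces i)

/-- Utilitarian welfare: sum of own-piece values. -/
noncomputable def util {n : ℕ} (v : Fin n → Measure ℝ) (d : ConnDiv n) : ℝ≥0∞ :=
  ∑ i, v i (d.pieces i)

/-- Egalitarian welfare: minimum own-piece value. -/
noncomputable def egal {n : ℕ} (v : Fin n → Measure ℝ) (d : ConnDiv n) : ℝ≥0∞ :=
  ⨅ i, v i (d.pieces i)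

/-- The uniform measure of total mass `m` on the interval `(a,b)`. -/
noncomputable def unifOn (a b m : ℝ) : Measure ℝ :=
  ENNReal.ofReal (m / (b - a)) • volume.restrict (Set.Ioo a b)

/-- Alice's measure: uniform (Lebesgue) on `[0,1]`. -/
noncomputable def vAlice : Measure ℝ := volume.restrict (Set.Icc (0:ℝ) 1)

/-- Bob's measure: uniform on `[1/2 - δ, 1/2 + δ]`. -/
noncomputable def vBob (δ : ℝ) : Measure ℝ := unifOn (1/2 - δ) (1/2 + δ) 1

/-!
In a complete two-piece division the pieces cover `[0,1]` up to finitely many points, so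
Alice's envy-freeness forces her piece `A` to have length at least `1/2`. Such an interval
straddles `1/2`, and Bob, whose density `1/(2δ) ≥ 1` sits around `1/2`, values it at least as
much as Alice does; hence the welfare `vAlice A + vBob B ≤ vBob A + vBob B ≤ 1`.
Discarding the tail `(1 - 2δ, 1)` instead lets Alice keep `(0, 1/2 - δ)` without envy while Bob
receives his whole support, for welfare `3/2 - δ`.
-/

lemma unifOn_Ioo {a b m : ℝ} (hm : 0 ≤ m) (hab : a ≤ b) (u v : ℝ) :
    unifOn a b m (Ioo u v) = ENNReal.ofReal (m / (b - a) * (min v b - max u a)) := by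
  rw [unifOn, Measure.smul_apply, Measure.restrict_apply measurableSet_Ioo, Ioo_inter_Ioo,
    Real.volume_Ioo, smul_eq_mul, ENNReal.ofReal_mul (div_nonneg hm (sub_nonneg.2 hab))]

lemma unifOn_univ {a b m : ℝ} (hab : a < b) : unifOn a b m univ = ENNReal.ofReal m := by
  rw [unifOn, Measure.smul_apply, Measure.restrict_apply_univ, Real.volume_Ioo, smul_eq_mul,
    ← ENNReal.ofReal_mul' (sub_nonneg.2 hab.le), div_mul_cancel₀ _ (sub_pos.2 hab).ne']

lemma vAlice_eq_unifOn : vAlice = unifOn 0 1 1 := by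
  rw [vAlice, unifOn, sub_zero, div_one, ENNReal.ofReal_one, one_smul,
    Measure.restrict_congr_set Ioo_ae_eq_Icc]

instance : NullSingletonClass vAlice := by
  unfold vAlice
  infer_instance

lemma vAlice_Ioo (u v : ℝ) : vAlice (Ioo u v) = ENNReal.ofReal (min v 1 - max u 0) := by
  rw [vAlice_eq_unifOn, unifOn_Ioo zero_le_one zero_le_one]
  norm_num

lemma vBob_Ioo {δ : ℝ} (hδ : 0 ≤ δ) (u v : ℝ) :
    vBob δ (Ioo u v) = ENNReal.ofReal ((min v (1/2 + δ) - max u (1/2 - δ)) / (2 * δ)) := by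
  rw [vBob, unifOn_Ioo zero_le_one (by linarith), one_div_mul_eq_div]
  ring_nf

lemma vBob_univ {δ : ℝ} (hδ : 0 < δ) : vBob δ univ = 1 := by
  rw [vBob, unifOn_univ (by linarith), ENNReal.ofReal_one]

namespace ConnDiv

lemma measurableSet_pieces {n : ℕ} (d : ConnDiv n) (i : Fin n) : MeasurableSet (d.pieces i) := by
  obtain ⟨a, b, h⟩ := d.isInterval i
  exact h ▸ measurableSet_Ioo

lemma sum_measure_pieces_le {n : ℕ} (d : ConnDiv n) (μ : Measure ℝ) :
    ∑ i, μ (d.pieces i) ≤ μ (Icc 0 1) := by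
  calc ∑ i, μ (d.pieces i) = μ (⋃ i, d.pieces i) := by
        rw [measure_iUnion d.disj d.measurableSet_pieces, tsum_fintype]
    _ ≤ μ (Icc 0 1) := measure_mono (iUnion_subset d.subset)

lemma measure_closure_pieces {n : ℕ} (d : ConnDiv n) (μ : Measure ℝ) [NullSingletonClass μ]
    (i : Fin n) : μ (closure (d.pieces i)) = μ (d.pieces i) := by
  obtain ⟨a, b, h⟩ := d.isInterval i
  refine le_antisymm ?_ (measure_mono subset_closure)
  rw [h, measure_congr (Ioo_ae_eq_Icc (μ := μ))]
  exact measure_mono (closure_minimal Ioo_subset_Icc_self isClosed_Icc)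

lemma Complete.measure_Icc_le_sum {n : ℕ} {d : ConnDiv n} (hd : d.Complete) (μ : Measure ℝ)
    [NullSingletonClass μ] : μ (Icc 0 1) ≤ ∑ i, μ (d.pieces i) :=
  calc μ (Icc 0 1) ≤ μ (⋃ i, closure (d.pieces i)) := measure_mono hd
    _ ≤ ∑ i, μ (closure (d.pieces i)) := measure_iUnion_fintype_le μ _
    _ = ∑ i, μ (d.pieces i) := by simp only [d.measure_closure_pieces μ]

lemma not_complete_of_subset_Iic {n : ℕ} (d : ConnDiv n) {c : ℝ} (hc : c < 1)
    (h : ∀ i, d.pieces i ⊆ Iic c) : ¬ d.Complete := by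
  intro hd
  obtain ⟨i, hi⟩ := mem_iUnion.1 (hd ⟨zero_le_one, le_rfl⟩)
  exact hc.not_ge (closure_minimal (h i) isClosed_Iic hi)

def ofAdjacent (a b c : ℝ) (ha : 0 ≤ a) (hab : a ≤ b) (hbc : b ≤ c) (hc : c ≤ 1) : ConnDiv 2 where
  pieces := ![Ioo a b, Ioo b c]
  isInterval := Fin.forall_fin_two.2 ⟨⟨a, b, rfl⟩, b, c, rfl⟩
  subset := Fin.forall_fin_two.2
    ⟨Ioo_subset_Icc_self.trans (Icc_subset_Icc ha (hbc.trans hc)),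
      Ioo_subset_Icc_self.trans (Icc_subset_Icc (ha.trans hab) hc)⟩
  disj := by
    have h : Disjoint (Ioo a b) (Ioo b c) :=
      Ioo_disjoint_Ioo.2 ((min_le_left _ _).trans (le_max_right _ _))
    intro i j hij
    fin_cases i <;> fin_cases j <;> first | exact absurd rfl hij | exact h | exact h.symm

end ConnDiv

lemma envyFree_two_iff {v : Fin 2 → Measure ℝ} {d : ConnDiv 2} :
    EnvyFree v d ↔ v 0 (d.pieces 1) ≤ v 0 (d.pieces 0) ∧ v 1 (d.pieces 0) ≤ v 1 (d.pieces 1) := by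
  simp [EnvyFree, Fin.forall_fin_two]

lemma util_two (v : Fin 2 → Measure ℝ) (d : ConnDiv 2) :
    util v d = v 0 (d.pieces 0) + v 1 (d.pieces 1) :=
  Fin.sum_univ_two _

lemma min_half_le_min_div {δ x : ℝ} (hδ : 0 < δ) (hδ' : δ ≤ 1/2) (hx : 0 ≤ x) :
    min x (1/2) ≤ min x δ / (2 * δ) := by
  rcases le_total x δ with hxδ | hδx
  · rw [min_eq_left hxδ, le_div_iff₀ (by positivity)]
    nlinarith [min_le_left x (1/2)]
  · rw [min_eq_right hδx, mul_comm, ← div_div, div_self hδ.ne']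
    exact min_le_right _ _

/-- Split at `1/2`: Bob's density `1/(2δ)` exceeds Alice's on his support, and on either side
of `1/2` Alice has mass at most `1/2`, which is all Bob has there. -/
lemma vAlice_Ioo_le_vBob_Ioo {δ a b : ℝ} (hδ : 0 < δ) (hδ' : δ ≤ 1/2) (ha : a ≤ 1/2)
    (hb : 1/2 ≤ b) : vAlice (Ioo a b) ≤ vBob δ (Ioo a b) := by
  rw [vAlice_Ioo, vBob_Ioo hδ.le]
  apply ENNReal.ofReal_le_ofReal
  have hright := min_half_le_min_div hδ hδ' (sub_nonneg.2 hb)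
  have hleft := min_half_le_min_div hδ hδ' (sub_nonneg.2 ha)
  have e1 : min b 1 - 1/2 = min (b - 1/2) (1/2) := by rw [← min_sub_sub_right]; norm_num
  have e2 : min b (1/2 + δ) - 1/2 = min (b - 1/2) δ := by rw [← min_sub_sub_right]; ring_nf
  have e3 : 1/2 - max a 0 = min (1/2 - a) (1/2) := by rw [← min_sub_sub_left]; norm_num
  have e4 : 1/2 - max a (1/2 - δ) = min (1/2 - a) δ := by rw [← min_sub_sub_left]; ring_nf
  calc min b 1 - max a 0 = (min b 1 - 1/2) + (1/2 - max a 0) := by ring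
    _ ≤ (min b (1/2 + δ) - 1/2) / (2 * δ) + (1/2 - max a (1/2 - δ)) / (2 * δ) := by
        rw [e1, e2, e3, e4]; exact add_le_add hright hleft
    _ = (min b (1/2 + δ) - max a (1/2 - δ)) / (2 * δ) := by ring

lemma util_le_one_of_complete {δ : ℝ} (hδ : 0 < δ) (hδ' : δ ≤ 1/2) {x : ConnDiv 2}
    (hx : x.Complete) (hef : EnvyFree ![vAlice, vBob δ] x) :
    util ![vAlice, vBob δ] x ≤ 1 := by
  obtain ⟨a, b, hA⟩ := x.isInterval 0
  have hAlice : 1 ≤ vAlice (x.pieces 0) + vAlice (x.pieces 1) := by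
    simpa [Fin.sum_univ_two, vAlice, Real.volume_Icc] using hx.measure_Icc_le_sum vAlice
  have hBob : vBob δ (x.pieces 0) + vBob δ (x.pieces 1) ≤ 1 := by
    simpa [Fin.sum_univ_two, vBob_univ hδ] using
      (x.sum_measure_pieces_le (vBob δ)).trans (measure_mono (subset_univ _))
  have hhalf : 1 ≤ 2 * vAlice (Ioo a b) := by
    have hEF : vAlice (x.pieces 1) ≤ vAlice (x.pieces 0) := (envyFree_two_iff.1 hef).1
    rw [← hA, two_mul]
    exact hAlice.trans (by gcongr)
  have hlen : 1/2 ≤ min b 1 - max a 0 := by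
    rw [vAlice_Ioo, ← ENNReal.ofReal_ofNat, ← ENNReal.ofReal_mul zero_le_two,
      ENNReal.one_le_ofReal] at hhalf
    linarith
  have hdom := vAlice_Ioo_le_vBob_Ioo (a := a) (b := b) hδ hδ'
    (by linarith [le_max_left a 0, min_le_right b 1])
    (by linarith [min_le_left b 1, le_max_right a 0])
  rw [← hA] at hdom
  calc util ![vAlice, vBob δ] x = vAlice (x.pieces 0) + vBob δ (x.pieces 1) := util_two _ _
    _ ≤ vBob δ (x.pieces 0) + vBob δ (x.pieces 1) := by gcongr
    _ ≤ 1 := hBob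

section Dumping

variable {δ : ℝ} {y : ConnDiv 2}

lemma envyFree_of_pieces_eq (hδ : 0 ≤ δ) (hδ' : δ ≤ 1/2) (h0 : y.pieces 0 = Ioo 0 (1/2 - δ))
    (h1 : y.pieces 1 = Ioo (1/2 - δ) (1 - 2*δ)) : EnvyFree ![vAlice, vBob δ] y := by
  refine envyFree_two_iff.2 ⟨?_, ?_⟩
  · show vAlice (y.pieces 1) ≤ vAlice (y.pieces 0)
    rw [h0, h1, vAlice_Ioo, vAlice_Ioo, min_eq_left (by linarith), min_eq_left (by linarith),
      max_eq_left (by linarith), max_self]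
    exact ENNReal.ofReal_le_ofReal (by linarith)
  · show vBob δ (y.pieces 0) ≤ vBob δ (y.pieces 1)
    rw [h0, vBob_Ioo hδ, min_eq_left (by linarith), max_eq_right (by linarith)]
    simp

lemma util_of_pieces_eq (hδ : 0 < δ) (hδ6 : δ ≤ 1/6) (h0 : y.pieces 0 = Ioo 0 (1/2 - δ))
    (h1 : y.pieces 1 = Ioo (1/2 - δ) (1 - 2*δ)) :
    util ![vAlice, vBob δ] y = ENNReal.ofReal (3/2 - δ) := by
  have hBob : vBob δ (y.pieces 1) = 1 := by
    rw [h1, vBob_Ioo hδ.le, min_eq_right (by linarith), max_self,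
      show (1/2 + δ - (1/2 - δ)) / (2 * δ) = 1 by field_simp; ring, ENNReal.ofReal_one]
  rw [util_two]
  show vAlice (y.pieces 0) + vBob δ (y.pieces 1) = _
  rw [hBob, h0, vAlice_Ioo, min_eq_left (by linarith), max_self, ← ENNReal.ofReal_one,
    ← ENNReal.ofReal_add (by linarith) zero_le_one]
  ring_nf

end Dumping

/-- Two-player utilitarian dumping paradox of at least `3/2 - ε`. -/
theorem two_player_utilitarian_dumping (ε : ℝ) (hε : 0 < ε) :
    ∃ δ : ℝ, 0 < δ ∧ δ < 1/2 ∧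
      -- every envy-free complete connected division has welfare at most 1 + 2δc
      (∃ c : ℝ, ∀ x : ConnDiv 2, x.Complete → EnvyFree ![vAlice, vBob δ] x →
        util ![vAlice, vBob δ] x ≤ ENNReal.ofReal (1 + 2*δ*c)) ∧
      -- the partial division: Alice gets (0, 1/2-δ), Bob gets (1/2-δ, 1-ε'),
      -- and (1-ε', 1) is discarded
      (∃ ε' : ℝ, 0 < ε' ∧ ε' < 1 ∧ ∃ y : ConnDiv 2,
        y.pieces 0 = Set.Ioo 0 (1/2 - δ) ∧
        y.pieces 1 = Set.Ioo (1/2 - δ) (1 - ε') ∧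
        EnvyFree ![vAlice, vBob δ] y ∧ ¬ y.Complete ∧
        ENNReal.ofReal (3/2 - ε) ≤ util ![vAlice, vBob δ] y ∧
        ∀ x : ConnDiv 2, x.Complete → EnvyFree ![vAlice, vBob δ] x →
          ENNReal.ofReal (3/2 - ε) * util ![vAlice, vBob δ] x ≤
            util ![vAlice, vBob δ] y) := by
  obtain ⟨δ, hδ, hδε, hδ6⟩ : ∃ δ : ℝ, 0 < δ ∧ δ ≤ ε ∧ δ ≤ 1/6 :=
    ⟨min ε (1/6), lt_min hε (by norm_num), min_le_left _ _, min_le_right _ _⟩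
  have hcomplete {x : ConnDiv 2} (hx : x.Complete) (hef : EnvyFree ![vAlice, vBob δ] x) :
      util ![vAlice, vBob δ] x ≤ 1 :=
    util_le_one_of_complete hδ (by linarith) hx hef
  let y := ConnDiv.ofAdjacent 0 (1/2 - δ) (1 - 2*δ) le_rfl (by linarith) (by linarith)
    (by linarith)
  have hy0 : y.pieces 0 = Ioo 0 (1/2 - δ) := rfl
  have hy1 : y.pieces 1 = Ioo (1/2 - δ) (1 - 2*δ) := rfl
  have hεy : ENNReal.ofReal (3/2 - ε) ≤ util ![vAlice, vBob δ] y := by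
    rw [util_of_pieces_eq hδ hδ6 hy0 hy1]
    exact ENNReal.ofReal_le_ofReal (by linarith)
  refine ⟨δ, hδ, by linarith, ⟨0, fun x hx hef => by simpa using hcomplete hx hef⟩,
    2*δ, by linarith, by linarith, y, hy0, hy1, envyFree_of_pieces_eq hδ.le (by linarith) hy0 hy1,
    y.not_complete_of_subset_Iic (c := 1 - 2*δ) (by linarith) ?_, hεy, fun x hx hef => ?_⟩
  · refine Fin.forall_fin_two.2 ⟨fun t ht => ?_, fun t ht => ht.2.le⟩
    exact (show t < 1/2 - δ from ht.2).le.trans (by linarith)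
  · calc ENNReal.ofReal (3/2 - ε) * util ![vAlice, vBob δ] x
        ≤ ENNReal.ofReal (3/2 - ε) * 1 := by gcongr; exact hcomplete hx hef
      _ ≤ util ![vAlice, vBob δ] y := by rwa [mul_one]
end

section
/- No division, partial or complete, strictly Pareto dominates an envy-free complete connected division: if x is an envy-free complete connected division for n players, there is no connected division y (partial or complete) with v_i(y_i) > v_i(x_i) for all i ∈ [n]. -/
open MeasureTheory Set
open scoped ENNReal

/-!
If every player strictly prefers her piece `yᵢ` of `y` to her piece `xᵢ` of the envy-free
division `x`, then `yᵢ` fits inside no single piece of `x`; being connected, it contains a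
point `pᵢ ∈ (0,1)` lying in no piece of `x`. By completeness such a point is the right end
(the supremum) of some piece of `x`. The points `pᵢ` are distinct, so this assigns distinct
pieces to the `n` players, i.e. every piece of `x` ends at some `pᵢ < 1`. This is absurd,
since the piece whose closure contains `1` ends at `1`.
-/

theorem IsPreconnected.exists_subset_of_subset_iUnion {α ι : Type*} [TopologicalSpace α]
    {s : Set α} {u : ι → Set α} (hs : IsPreconnected s) (hne : s.Nonempty)
    (hu : ∀ i, IsOpen (u i)) (hdisj : Pairwise fun i j => Disjoint (u i) (u j))
    (hsu : s ⊆ ⋃ i, u i) :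
    ∃ i, s ⊆ u i := by
  obtain ⟨q, hq⟩ := hne
  obtain ⟨j, hqj⟩ := mem_iUnion.1 (hsu hq)
  refine ⟨j, hs.subset_left_of_subset_union (hu j) (isOpen_biUnion fun k _ => hu k)
    (disjoint_iUnion₂_right.2 fun k hk => hdisj (Ne.symm hk)) ?_ ⟨q, hq, hqj⟩⟩
  refine hsu.trans (iUnion_subset fun k => ?_)
  by_cases hkj : k = j
  · exact hkj ▸ subset_union_left
  · exact (subset_biUnion_of_mem (u := u) (mem_compl_singleton_iff.2 hkj)).trans
      subset_union_right

theorem Set.OrdConnected.subset_Iio_of_notMem {α : Type*} [LinearOrder α] {s : Set α} {p : α}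
    (hs : s.OrdConnected) (hp : p ∉ s) (hne : (s ∩ Iio p).Nonempty) : s ⊆ Iio p := by
  obtain ⟨a, has, hap⟩ := hne
  exact fun t ht => not_le.1 fun hpt => hp (hs.out has ht ⟨hap.le, hpt⟩)

theorem exists_isLUB_of_notMem_iUnion {ι : Type*} [Finite ι] {s : ι → Set ℝ}
    (hs : ∀ k, (s k).OrdConnected) (hcov : Icc 0 1 ⊆ ⋃ k, closure (s k)) {p : ℝ}
    (hp : p ∈ Ioc 0 1) (hps : p ∉ ⋃ k, s k) : ∃ k, IsLUB (s k) p := by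
  have hleft : Ioo 0 p ⊆ ⋃ k, closure (Iio p ∩ s k) := fun q hq => by
    obtain ⟨k, hk⟩ := mem_iUnion.1 (hcov ⟨hq.1.le, hq.2.le.trans hp.2⟩)
    exact mem_iUnion.2 ⟨k, isOpen_Iio.inter_closure ⟨hq.2, hk⟩⟩
  have hpmem : p ∈ ⋃ k, closure (Iio p ∩ s k) := by
    refine closure_minimal hleft (isClosed_iUnion_of_finite fun _ => isClosed_closure) ?_
    rw [closure_Ioo hp.1.ne]
    exact right_mem_Icc.2 hp.1.le
  obtain ⟨k, hk⟩ := mem_iUnion.1 hpmem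
  have hsub : s k ⊆ Iio p := (hs k).subset_Iio_of_notMem (fun h => hps (mem_iUnion.2 ⟨k, h⟩))
    (inter_comm _ _ ▸ closure_nonempty_iff.1 ⟨p, hk⟩)
  exact ⟨k, isLUB_of_mem_closure (fun _ ht => (hsub ht).le)
    (closure_mono inter_subset_right hk)⟩

namespace ConnDiv

variable {n : ℕ} (d : ConnDiv n) (i : Fin n)

theorem isOpen_pieces : IsOpen (d.pieces i) := by
  obtain ⟨a, b, h⟩ := d.isInterval i
  exact h ▸ isOpen_Ioo

theorem ordConnected_pieces : (d.pieces i).OrdConnected := by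
  obtain ⟨a, b, h⟩ := d.isInterval i
  exact h ▸ ordConnected_Ioo

theorem pieces_subset_Ioo : d.pieces i ⊆ Ioo 0 1 :=
  interior_Icc (a := (0 : ℝ)) (b := 1) ▸ (d.isOpen_pieces i).subset_interior_iff.2 (d.subset i)

end ConnDiv

theorem EnvyFree.exists_notMem_iUnion {n : ℕ} {v : Fin n → Measure ℝ} {x : ConnDiv n}
    (hEF : EnvyFree v x) {i : Fin n} {s : Set ℝ} (hs : IsPreconnected s)
    (hlt : v i (x.pieces i) < v i s) : ∃ p ∈ s, p ∉ ⋃ k, x.pieces k := by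
  by_contra! hsub
  have hne : s.Nonempty := nonempty_of_measure_ne_zero (pos_of_gt hlt).ne'
  obtain ⟨j, hj⟩ := hs.exists_subset_of_subset_iUnion hne x.isOpen_pieces x.disj hsub
  exact (measure_mono hj |>.trans (hEF i j)).not_gt hlt

theorem no_strict_pareto_domination_general (n : ℕ) (v : Fin n → Measure ℝ)
    (x : ConnDiv n) (hc : x.Complete) (hEF : EnvyFree v x) :
    ¬ ∃ y : ConnDiv n, ∀ i, v i (x.pieces i) < v i (y.pieces i) := by
  rintro ⟨y, hy⟩
  choose p hpy hpx using fun i =>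
    hEF.exists_notMem_iUnion (y.ordConnected_pieces i).isPreconnected (hy i)
  have hp01 : ∀ i, p i ∈ Ioo 0 1 := fun i => y.pieces_subset_Ioo i (hpy i)
  choose g hg using fun i =>
    exists_isLUB_of_notMem_iUnion x.ordConnected_pieces hc (Ioo_subset_Ioc_self (hp01 i)) (hpx i)
  have hinj : Function.Injective g := fun i i' h =>
    y.disj.eq (not_disjoint_iff.2 ⟨p i, hpy i, ((hg i).unique (h ▸ hg i')) ▸ hpy i'⟩)
  obtain ⟨j, hj⟩ := mem_iUnion.1 (hc (right_mem_Icc.2 zero_le_one))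
  obtain ⟨i, rfl⟩ := Finite.injective_iff_surjective.1 hinj j
  have h1p : (1 : ℝ) ≤ p i := (upperBounds_closure (x.pieces (g i)) ▸ (hg i).1) hj
  exact (hp01 i).2.not_ge h1p

/-- No division, partial or complete, strictly Pareto dominates an envy-free
complete connected division. -/
theorem no_strict_pareto_domination (n : ℕ) (v : Fin n → Measure ℝ)
    (hprob : ∀ i, v i (Set.Icc (0:ℝ) 1) = 1)
    (hna : ∀ i, ∀ x : ℝ, v i {x} = 0)
    (x : ConnDiv n) (hc : x.Complete) (hEF : EnvyFree v x) :
    ¬ ∃ y : ConnDiv n, ∀ i, v i (x.pieces i) < v i (y.pieces i) :=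
  no_strict_pareto_domination_general n v x hc hEF
end
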